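/- Fix a > 0 and β ∈ (−1, 0]. If u ∈ H¹(ℝ³) satisfies ∫u² = a² and 2∫|∇u|² = (3/4)·2(1+β)∫u⁴ (i.e. (u,u) lies on the symmetric Pohozaev constraint with μ=1), then J(u,u) := ∫|∇u|² − ((1+β)/2)∫u⁴ satisfies J(u,u) = (1/3)∫|∇u|² ≥ 16/(27 C² a² (1+β)²), where C is the 3-dimensional Gagliardo–Nirenberg constant with ∫w⁴ ≤ C(∫w²)^{1/2}(∫|∇w|²)^{3/2}. In particular, the infimum of J over such symmetric constrained pairs tends to +∞ as β ↓ −1. -/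
import Mathlib


open MeasureTheory Real

noncomputable section

abbrev E3 := EuclideanSpace ℝ (Fin 3)

def gradSq (w : E3 → ℝ) (x : E3) : ℝ := ‖fderiv ℝ w x‖ ^ 2

/-- For `β ∈ (−1,0]` and `u` with `∫u² = a²` such that `(u,u)` lies on the symmetric
Pohozaev constraint `2∫|∇u|² = (3/4)·2(1+β)∫u⁴`, the energy
`J(u,u) = ∫|∇u|² − ((1+β)/2)∫u⁴` equals `(1/3)∫|∇u|²` and is bounded below by
`16/(27 C² a² (1+β)²)`, where `C` is the Gagliardo–Nirenberg constant. -/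
theorem symmetric_level_blows_up (a β C : ℝ) (ha : 0 < a)
    (hβ₁ : -1 < β) (hβ₂ : β ≤ 0) (hC : 0 < C) (u : E3 → ℝ)
    (hKpos : 0 < ∫ x : E3, gradSq u x)
    (hmass : (∫ x : E3, (u x) ^ 2) = a ^ 2)
    (hGN : (∫ x : E3, (u x) ^ 4) ≤
      C * (∫ x : E3, (u x) ^ 2) ^ ((1 : ℝ) / 2) *
        (∫ x : E3, gradSq u x) ^ ((3 : ℝ) / 2))
    (hpoh : 2 * (∫ x : E3, gradSq u x) =
      (3 / 4) * (2 * (1 + β)) * (∫ x : E3, (u x) ^ 4)) :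
    (∫ x : E3, gradSq u x) - ((1 + β) / 2) * (∫ x : E3, (u x) ^ 4) =
      (1 / 3) * (∫ x : E3, gradSq u x) ∧
    16 / (27 * C ^ 2 * a ^ 2 * (1 + β) ^ 2) ≤
      (∫ x : E3, gradSq u x) - ((1 + β) / 2) * (∫ x : E3, (u x) ^ 4) := by
  set K := ∫ x : E3, gradSq u x with hK
  set Q := ∫ x : E3, (u x) ^ 4 with hQ
  have hβ : 0 < 1 + β := by linarith
  have h1 : (1 + β) * Q = 4 * K / 3 := by linarith
  have heq : K - (1 + β) / 2 * Q = 1 / 3 * K := by linarith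
  refine ⟨heq, ?_⟩
  rw [heq]
  set s := Real.sqrt K with hs
  have hspos : 0 < s := Real.sqrt_pos.mpr hKpos
  have hks : K = s ^ 2 := (Real.sq_sqrt hKpos.le).symm
  have hmass' : (∫ x : E3, (u x) ^ 2) ^ ((1 : ℝ) / 2) = a := by
    rw [hmass, ← Real.sqrt_eq_rpow, Real.sqrt_sq ha.le]
  have hKrp : K ^ ((3 : ℝ) / 2) = K * s := by
    have : ((3 : ℝ) / 2) = 1 + 1 / 2 := by norm_num
    rw [this, Real.rpow_add hKpos, Real.rpow_one, ← Real.sqrt_eq_rpow]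
  rw [hmass', hKrp] at hGN
  -- from hGN and h1: 4/3 ≤ (1+β) C a s
  have key : 4 / 3 ≤ (1 + β) * C * a * s := by
    have h2 : (1 + β) * Q ≤ (1 + β) * (C * a * (K * s)) :=
      mul_le_mul_of_nonneg_left hGN hβ.le
    rw [h1, hks] at h2
    have h3 : 4 / 3 * s ^ 2 ≤ ((1 + β) * C * a * s) * s ^ 2 := by nlinarith
    exact le_of_mul_le_mul_right h3 (by positivity)
  have hKlb : 16 / (9 * C ^ 2 * a ^ 2 * (1 + β) ^ 2) ≤ K := by
    rw [div_le_iff₀ (by positivity)] at *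
    rw [hks]
    nlinarith [key, mul_pos (mul_pos (mul_pos hβ hC) ha) hspos]
  rw [div_le_iff₀ (by positivity)]
  rw [div_le_iff₀ (by positivity)] at hKlb
  nlinarith
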